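/- arXiv:2507.04231 — 3 statements merged into one kernel-verified Lean document; each statement's English description precedes it below -/
import Mathlib

section
/- Let R be a commutative ring, a ∈ R a unit, and n ≥ 1. Then x = Σ_{k=1}^{n-1} C_{k-1} · a^{-(2k-1)} · t^k satisfies x² − a·x + t ≡ 0 (mod t^n) in R[t]. -/
open Polynomial Finset

theorem modular_polynomial_resolution (R : Type*) [CommRing R] (a : Rˣ) (n : ℕ) (hn : 1 ≤ n) :
    let x : R[X] := ∑ k ∈ Finset.Ico 1 n,
      C ((catalan (k - 1) : R) * ((a⁻¹ : Rˣ) : R) ^ (2 * k - 1)) * X ^ k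
    x ^ 2 - C ((a : Rˣ) : R) * x + X ∈ Ideal.span {(X : R[X]) ^ n} := by
  intro x
  rw [Ideal.mem_span_singleton, X_pow_dvd_iff]
  intro d hd
  set b : ℕ → R := fun k => (catalan (k - 1) : R) * ((a⁻¹ : Rˣ) : R) ^ (2 * k - 1) with hb
  have hxc : ∀ m, x.coeff m = if 1 ≤ m ∧ m < n then b m else 0 := by
    intro m
    simp only [x, finset_sum_coeff, coeff_C_mul, coeff_X_pow, mul_ite, mul_one, mul_zero]
    simp [Finset.sum_ite_eq, Finset.mem_Ico, hb]
  have hainv : ((a : Rˣ) : R) * ((a⁻¹ : Rˣ) : R) = 1 := by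
    rw [← Units.val_mul, mul_inv_cancel, Units.val_one]
  rw [coeff_add, coeff_sub, coeff_X, coeff_C_mul, sq, coeff_mul]
  match d, hd with
  | 0, hd => simp [hxc]
  | 1, hd =>
      have h1 : x.coeff 1 = ((a⁻¹ : Rˣ) : R) := by
        rw [hxc]; simp [hb, hd]
      rw [Finset.Nat.sum_antidiagonal_eq_sum_range_succ (fun i j => x.coeff i * x.coeff j)]
      have h0 : x.coeff 0 = 0 := by rw [hxc]; simp
      simp [Finset.sum_range_succ, h0, h1, hainv]
  | (e+2), hd =>
      have hsum : (∑ ij ∈ antidiagonal (e + 2), x.coeff ij.1 * x.coeff ij.2)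
          = (catalan (e + 1) : R) * ((a⁻¹ : Rˣ) : R) ^ (2 * e + 2) := by
        rw [Finset.Nat.sum_antidiagonal_eq_sum_range_succ (fun i j => x.coeff i * x.coeff j)]
        have key : ∀ k ∈ Finset.range (e + 3), x.coeff k * x.coeff (e + 2 - k)
            = if k ∈ Finset.Ico 1 (e + 2) then
                ((catalan (k-1) : R) * (catalan (e + 1 - k) : R)) * ((a⁻¹ : Rˣ) : R) ^ (2 * e + 2)
              else 0 := by
          intro k hk
          simp only [Finset.mem_range] at hk
          simp only [Finset.mem_Ico]
          by_cases h1 : 1 ≤ k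
          · by_cases h2 : k < e + 2
            · rw [if_pos ⟨h1, h2⟩, hxc, hxc]
              have hkn : k < n := lt_trans h2 hd
              have hj1 : 1 ≤ e + 2 - k := by omega
              have hjn : e + 2 - k < n := by omega
              rw [if_pos ⟨h1, hkn⟩, if_pos ⟨hj1, hjn⟩]
              simp only [hb]
              have hexp : (2 * k - 1) + (2 * (e + 2 - k) - 1) = 2 * e + 2 := by omega
              have hcat : e + 2 - k - 1 = e + 1 - k := by omega
              rw [hcat, mul_mul_mul_comm, ← pow_add, hexp]
            · have : k = e + 2 := by omega
              subst this
              rw [if_neg (by omega)]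
              have h0 : x.coeff 0 = 0 := by rw [hxc]; simp
              simp [h0]
          · have : k = 0 := by omega
            subst this
            rw [if_neg (by omega)]
            have h0 : x.coeff 0 = 0 := by rw [hxc]; simp
            simp [h0]
        rw [Finset.sum_congr rfl key, Finset.sum_ite_mem]
        have hset : Finset.range (e + 3) ∩ Finset.Ico 1 (e + 2) = Finset.Ico 1 (e + 2) := by
          apply Finset.inter_eq_right.mpr
          intro k hk
          simp only [Finset.mem_Ico] at hk
          simp only [Finset.mem_range]
          omega
        rw [hset, ← Finset.sum_mul]
        congr 1
        have hnat : (∑ k ∈ Finset.Ico 1 (e + 2), catalan (k - 1) * catalan (e + 1 - k))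
            = catalan (e + 1) := by
          rw [Finset.sum_Ico_eq_sum_range]
          simp only [Nat.add_sub_cancel_left]
          rw [catalan_succ', Finset.Nat.sum_antidiagonal_eq_sum_range_succ
            (fun i j => catalan i * catalan j)]
          apply Finset.sum_congr (by norm_num)
          intro k hk
          congr 2
          omega
        calc (∑ k ∈ Finset.Ico 1 (e + 2), (catalan (k - 1) : R) * (catalan (e + 1 - k) : R))
            = ((∑ k ∈ Finset.Ico 1 (e + 2), catalan (k - 1) * catalan (e + 1 - k) : ℕ) : R) := by
              push_cast; rfl
          _ = (catalan (e + 1) : R) := by rw [hnat]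
      rw [hsum, hxc]
      rw [if_pos ⟨by omega, hd⟩]
      simp only [hb]
      have h1 : 2 * (e + 2) - 1 = 2 * e + 3 := by omega
      rw [h1, if_neg (by omega), add_zero]
      have h2 : e + 2 - 1 = e + 1 := by omega
      rw [h2]
      linear_combination (-(catalan (e+1) : R) * ((a⁻¹ : Rˣ) : R) ^ (2*e+2)) * hainv
end

section
/- In ℤ[[t]], the unique power series solution x with zero constant term of x² − a·x + t = 0 over ℚ (for a nonzero rational a) has coefficients x_k = C_{k-1} / a^{2k-1} for k ≥ 1. -/
/-!
With `c` the Catalan series, `c = 1 + X c²`, the series `y = (X / a) c(X / a²)` satisfies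
`y² - a y + X = 0` and has coefficients `C_{k-1} / a^(2k-1)`. Any other solution `x` with zero
constant term equals `y`, because `(x - y)(x + y - a) = 0` and `x + y - a` has the unit constant
term `-a`.
-/

open PowerSeries

namespace PowerSeries

theorem map_catalanSeries_sq_mul_X_add_one {R : Type*} [CommSemiring R] :
    map (Nat.castRingHom R) catalanSeries ^ 2 * X + 1 = map (Nat.castRingHom R) catalanSeries := by
  simpa using congrArg (map (Nat.castRingHom R)) catalanSeries_sq_mul_X_add_one

theorem eq_of_sq_sub_C_mul_eq {R : Type*} [CommRing R] {a : R} (ha : IsUnit a) {x y : R⟦X⟧}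
    (hx : constantCoeff x = 0) (hy : constantCoeff y = 0)
    (h : x ^ 2 - C a * x = y ^ 2 - C a * y) : x = y := by
  have hunit : IsUnit (x + y - C a) := by
    rw [isUnit_iff_constantCoeff]
    simpa [hx, hy] using ha.neg
  have hfactor : (x + y - C a) * (x - y) = 0 := by linear_combination h
  exact sub_eq_zero.mp (hunit.mul_right_eq_zero.mp hfactor)

section Field

variable {K : Type*} [Field K]

noncomputable def catalanQuadraticRoot (a : K) : K⟦X⟧ :=
  C a⁻¹ * X * rescale (a⁻¹ ^ 2) (map (Nat.castRingHom K) catalanSeries)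

theorem catalanQuadraticRoot_sq_sub_C_mul_add_X {a : K} (ha : a ≠ 0) :
    catalanQuadraticRoot a ^ 2 - C a * catalanQuadraticRoot a + X = 0 := by
  have h := congrArg (rescale (a⁻¹ ^ 2)) (map_catalanSeries_sq_mul_X_add_one (R := K))
  rw [map_add, map_mul, map_pow, rescale_X, map_one, map_pow] at h
  have hC : C a * C a⁻¹ = 1 := by rw [← map_mul, mul_inv_cancel₀ ha, map_one]
  unfold catalanQuadraticRoot
  set c := rescale (a⁻¹ ^ 2) (map (Nat.castRingHom K) catalanSeries)
  linear_combination X * h - X * c * hC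

theorem constantCoeff_catalanQuadraticRoot (a : K) :
    constantCoeff (catalanQuadraticRoot a) = 0 := by
  simp [catalanQuadraticRoot]

theorem coeff_succ_catalanQuadraticRoot (a : K) (n : ℕ) :
    coeff (n + 1) (catalanQuadraticRoot a) = catalan n / a ^ (2 * n + 1) := by
  simp only [catalanQuadraticRoot, mul_comm, mul_assoc, coeff_C_mul, coeff_succ_X_mul,
    coeff_rescale, coeff_map, catalanSeries_coeff, Nat.coe_castRingHom]
  field_simp
  ring

end Field

end PowerSeries

theorem catalan_coeffs_of_quadratic_solution (a : ℚ) (ha : a ≠ 0)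
    (x : PowerSeries ℚ) (hx0 : PowerSeries.constantCoeff x = 0)
    (hx : x ^ 2 - PowerSeries.C a * x + PowerSeries.X = 0) :
    ∀ k : ℕ, 1 ≤ k → PowerSeries.coeff k x = (catalan (k - 1) : ℚ) / a ^ (2 * k - 1) := by
  have hroot : x = catalanQuadraticRoot a :=
    eq_of_sq_sub_C_mul_eq (isUnit_iff_ne_zero.mpr ha) hx0 (constantCoeff_catalanQuadraticRoot a)
      (by linear_combination hx - catalanQuadraticRoot_sq_sub_C_mul_add_X ha)
  rintro (_ | n) hk
  · omega
  · rw [hroot, coeff_succ_catalanQuadraticRoot]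
    congr 2
end

section
/- Let R be an integral domain, n ≥ 1, and suppose x₁, x₂ ∈ R[[t]] both have zero constant term and satisfy x² − a·x + t ≡ 0 (mod t^n) for a unit a ∈ R. Then x₁ ≡ x₂ (mod t^n). -/
open PowerSeries

theorem Ideal.sub_mem_of_quadratic_of_isUnit {A : Type*} [CommRing A] (I : Ideal A)
    {b c x y : A} (hu : IsUnit (x + y - b)) (hx : x ^ 2 - b * x + c ∈ I)
    (hy : y ^ 2 - b * y + c ∈ I) : x - y ∈ I := by
  have hfactor : (x ^ 2 - b * x + c) - (y ^ 2 - b * y + c) = (x + y - b) * (x - y) := by ring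
  have hmem := I.sub_mem hx hy
  rwa [hfactor, I.unit_mul_mem_iff_mem hu] at hmem

theorem PowerSeries.isUnit_add_sub_C {R : Type*} [CommRing R] {x y : R⟦X⟧} {a : R}
    (hx : constantCoeff x = 0) (hy : constantCoeff y = 0) (ha : IsUnit a) :
    IsUnit (x + y - C a) := by
  rw [isUnit_iff_constantCoeff]
  simpa [hx, hy] using ha.neg

theorem quadratic_unit_solution_unique_mod_general (R : Type*) [CommRing R]
    (n : ℕ) (a : R) (ha : IsUnit a) (x₁ x₂ : PowerSeries R)
    (h₁0 : PowerSeries.constantCoeff x₁ = 0)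
    (h₂0 : PowerSeries.constantCoeff x₂ = 0)
    (h₁ : x₁ ^ 2 - PowerSeries.C a * x₁ + PowerSeries.X ∈
      Ideal.span {(PowerSeries.X : PowerSeries R) ^ n})
    (h₂ : x₂ ^ 2 - PowerSeries.C a * x₂ + PowerSeries.X ∈
      Ideal.span {(PowerSeries.X : PowerSeries R) ^ n}) :
    x₁ - x₂ ∈ Ideal.span {(PowerSeries.X : PowerSeries R) ^ n} :=
  Ideal.sub_mem_of_quadratic_of_isUnit _ (isUnit_add_sub_C h₁0 h₂0 ha) h₁ h₂

theorem quadratic_unit_solution_unique_mod (R : Type*) [CommRing R] [IsDomain R]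
    (n : ℕ) (hn : 1 ≤ n) (a : R) (ha : IsUnit a) (x₁ x₂ : PowerSeries R)
    (h₁0 : PowerSeries.constantCoeff x₁ = 0)
    (h₂0 : PowerSeries.constantCoeff x₂ = 0)
    (h₁ : x₁ ^ 2 - PowerSeries.C a * x₁ + PowerSeries.X ∈
      Ideal.span {(PowerSeries.X : PowerSeries R) ^ n})
    (h₂ : x₂ ^ 2 - PowerSeries.C a * x₂ + PowerSeries.X ∈
      Ideal.span {(PowerSeries.X : PowerSeries R) ^ n}) :
    x₁ - x₂ ∈ Ideal.span {(PowerSeries.X : PowerSeries R) ^ n} :=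
  quadratic_unit_solution_unique_mod_general R n a ha x₁ x₂ h₁0 h₂0 h₁ h₂
end
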